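/- arXiv:1808.07448 — 4 statements merged into one kernel-verified Lean document; each statement's English description precedes it below -/
import Mathlib

section
/- For x in (0,1), let 0, x, and x·e^{iα} be the vertices of a hyperbolic triangle in the unit disk, where ρ is the hyperbolic metric on the unit disk; then α = arccos((1+x^2)/2) makes ρ(0,x) = ρ(x, x e^{iα}). -/
open Complex

/-- The hyperbolic metric on the unit disk:
ρ(z,w) = log((1+|(z−w)/(1−conj(w)z)|)/(1−|(z−w)/(1−conj(w)z)|)). -/
noncomputable def hypDist (z w : ℂ) : ℝ :=
  Real.log ((1 + ‖(z - w) / (1 - (starRingEnd ℂ) w * z)‖) /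
    (1 - ‖(z - w) / (1 - (starRingEnd ℂ) w * z)‖))

/-- For x ∈ (0,1), the choice α = arccos((1+x²)/2) makes
ρ(0,x) = ρ(x, x·e^{iα}), so that the hyperbolic triangle with vertices 0, x, x e^{iα}
is equilateral. -/
theorem equilateral_angle (x : ℝ) (hx : x ∈ Set.Ioo (0 : ℝ) 1) :
    hypDist 0 (x : ℂ) =
      hypDist (x : ℂ) ((x : ℂ) * Complex.exp ((Real.arccos ((1 + x ^ 2) / 2) : ℂ) * Complex.I)) := by
  obtain ⟨hx0, hx1⟩ := hx
  set c : ℝ := (1 + x ^ 2) / 2 with hc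
  have hc1 : c ≤ 1 := by nlinarith
  have hcm1 : -1 ≤ c := by nlinarith
  set a := Real.arccos c with ha
  have hcos : Real.cos a = c := Real.cos_arccos hcm1 hc1
  have hsin : Real.sin a ^ 2 = 1 - c ^ 2 := by
    have h := Real.sin_sq_add_cos_sq a
    nlinarith
  have h1x : (0:ℝ) < 1 - x ^ 2 := by nlinarith
  have e1 : (x:ℂ) - (x:ℂ) * Complex.exp ((a:ℂ) * Complex.I) =
      ((x - x * Real.cos a : ℝ) : ℂ) + ((-(x * Real.sin a) : ℝ) : ℂ) * Complex.I := by
    rw [Complex.exp_mul_I, ← Complex.ofReal_cos, ← Complex.ofReal_sin]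
    push_cast
    ring
  have e2 : (1:ℂ) - (starRingEnd ℂ) ((x:ℂ) * Complex.exp ((a:ℂ) * Complex.I)) * (x:ℂ) =
      ((1 - x ^ 2 * Real.cos a : ℝ) : ℂ) + ((x ^ 2 * Real.sin a : ℝ) : ℂ) * Complex.I := by
    rw [Complex.exp_mul_I, ← Complex.ofReal_cos, ← Complex.ofReal_sin]
    simp only [map_mul, map_add, Complex.conj_ofReal, Complex.conj_I]
    push_cast
    ring
  have hnum : Complex.normSq ((x:ℂ) - (x:ℂ) * Complex.exp ((a:ℂ) * Complex.I)) =
      x ^ 2 * (1 - x ^ 2) := by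
    rw [e1, Complex.normSq_add_mul_I, hcos]
    rw [hc] at hsin ⊢
    linear_combination x ^ 2 * hsin
  have hden : Complex.normSq ((1:ℂ) - (starRingEnd ℂ) ((x:ℂ) * Complex.exp ((a:ℂ) * Complex.I)) * (x:ℂ)) =
      1 - x ^ 2 := by
    rw [e2, Complex.normSq_add_mul_I, hcos]
    rw [hc] at hsin ⊢
    linear_combination x ^ 4 * hsin
  have key : ‖((x:ℂ) - (x:ℂ) * Complex.exp ((a:ℂ) * Complex.I)) /
      (1 - (starRingEnd ℂ) ((x:ℂ) * Complex.exp ((a:ℂ) * Complex.I)) * (x:ℂ))‖ = x := by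
    rw [norm_div, Complex.norm_def, Complex.norm_def, hnum, hden,
      Real.sqrt_mul (sq_nonneg x), Real.sqrt_sq hx0.le]
    rw [mul_div_assoc, div_self (by positivity), mul_one]
  unfold hypDist
  rw [key]
  congr 2 <;>
  · simp [Complex.norm_real, abs_of_pos hx0]
end

section
/- If an equilateral hyperbolic triangle in the hyperbolic plane has side length r with 0 < r ≤ 1, then each of its internal angles θ satisfies 2π/7 < θ < π/3. -/
/-!
By the hyperbolic law of cosines, `cos θ = (1 + tanh² (r/2)) / 2 = cosh r / (cosh r + 1)`, which
increases with `cosh r`. For `0 < r ≤ 1` we have `1 < cosh r ≤ cosh 1 < 31/20`, so `cos θ` lies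
strictly between `1/2 = cos (π/3)` and `31/51 < 61/100 < cos (2π/7)`; the last bound comes from
`cos (2x) = 2 cos² x - 1` and `1 - x²/2 ≤ cos x` at `x = π/7`.
-/

open Real

namespace Real

theorem one_add_tanh_half_sq_div_two (r : ℝ) :
    (1 + tanh (r / 2) ^ 2) / 2 = cosh r / (cosh r + 1) := by
  have hdouble : cosh r = cosh (r / 2) ^ 2 + sinh (r / 2) ^ 2 := by
    rw [← cosh_two_mul]; ring_nf
  have hcosh : 0 < cosh (r / 2) := cosh_pos _
  rw [tanh_eq_sinh_div_cosh, hdouble]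
  field_simp
  linear_combination -cosh_sq_sub_sinh_sq (r / 2)

theorem cosh_one_lt : cosh 1 < 31 / 20 := by
  have he : exp 1 < 2.7182818286 := exp_one_lt_d9
  have he' : 2.7182818283 < exp 1 := exp_one_gt_d9
  have hinv : exp (-1) * exp 1 = 1 := by rw [← exp_add]; simp
  rw [cosh_eq]
  nlinarith

theorem lt_cos_two_mul_pi_div_seven : (61 / 100 : ℝ) < cos (2 * π / 7) := by
  have hπ : π / 7 < 0.45 := by linarith [pi_lt_d2]
  have hcos : 0.89875 ≤ cos (π / 7) := by
    nlinarith [one_sub_sq_div_two_le_cos (x := π / 7), pi_pos]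
  rw [show 2 * π / 7 = 2 * (π / 7) by ring, cos_two_mul]
  nlinarith

theorem lt_arccos_of_lt_cos {x y : ℝ} (hy₀ : 0 ≤ y) (hyπ : y ≤ π) (hx : -1 ≤ x)
    (h : x < cos y) : y < arccos x := by
  simpa [arccos_cos hy₀ hyπ] using arccos_lt_arccos hx h (cos_le_one y)

theorem arccos_lt_of_cos_lt {x y : ℝ} (hy₀ : 0 ≤ y) (hyπ : y ≤ π) (hx : x ≤ 1)
    (h : cos y < x) : arccos x < y := by
  simpa [arccos_cos hy₀ hyπ] using arccos_lt_arccos (neg_one_le_cos y) h hx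

end Real

/-- The internal angle θ = arccos((1 + tanh²(r/2))/2) of an equilateral
hyperbolic triangle of side length r, for 0 < r ≤ 1, satisfies 2π/7 < θ < π/3. -/
theorem internal_angle_bounds (r : ℝ) (hr0 : 0 < r) (hr1 : r ≤ 1) :
    2 * π / 7 < arccos ((1 + tanh (r / 2) ^ 2) / 2) ∧
      arccos ((1 + tanh (r / 2) ^ 2) / 2) < π / 3 := by
  rw [one_add_tanh_half_sq_div_two]
  have hc₀ : 1 < cosh r := one_lt_cosh.2 hr0.ne'
  have hc₁ : cosh r < 31 / 20 :=
    (cosh_le_cosh.2 (by rwa [abs_of_pos hr0, abs_one])).trans_lt cosh_one_lt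
  have hpos : 0 < cosh r + 1 := by linarith
  constructor
  · refine lt_arccos_of_lt_cos (by positivity) (by linarith [pi_pos])
      (by rw [le_div_iff₀ hpos]; linarith) ?_
    rw [div_lt_iff₀ hpos]
    nlinarith [lt_cos_two_mul_pi_div_seven]
  · refine arccos_lt_of_cos_lt (by positivity) (by linarith [pi_pos])
      (by rw [div_le_one hpos]; linarith) ?_
    rw [cos_pi_div_three, lt_div_iff₀ hpos]
    linarith
end

section
/- For t in (0,1), the hyperbolic midpoint of the geodesic segment joining tω and tω² (with ω = e^{2πi/3}) lies on the negative real axis at the point (√(1+t²+t⁴) − 1 − t²)/t. -/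
/-!
With δ(z, w) = |(z - w)/(1 - w̄z)| the pseudo-hyperbolic distance, ρ = log((1 + δ)/(1 - δ)), so
2ρ(a, m) = ρ(a, b) is the tanh double-angle formula δ(a, b) = 2δ(a, m)/(1 + δ(a, m)²). For
a = tω, b = tω² = ā and real m, the squared pseudo-distances are rational in t and m, and the
double-angle relation reduces to the quadratic t m² + 2(1 + t²) m + t = 0, whose root in (-1, 0)
is the stated point. Equidistance is the reflection symmetry in the real axis.
-/

open Complex

open ComplexConjugate

local notation "ω" => Complex.exp (2 * Real.pi * Complex.I / 3)

theorem isPrimitiveRoot_omega : IsPrimitiveRoot ω 3 := by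
  simpa using Complex.isPrimitiveRoot_exp 3 (by norm_num)

theorem omega_sq_add_omega_add_one : ω ^ 2 + ω + 1 = 0 := by
  have := isPrimitiveRoot_omega.geom_sum_eq_zero (by norm_num)
  rw [Finset.sum_range_succ, Finset.sum_range_succ, Finset.sum_range_one] at this
  linear_combination this

theorem normSq_omega : normSq ω = 1 := by
  rw [← Complex.sq_norm, isPrimitiveRoot_omega.norm'_eq_one (by norm_num), one_pow]

theorem conj_omega : conj ω = ω ^ 2 := by
  have h : ω ^ 2 * ω = 1 := by rw [← pow_succ]; exact isPrimitiveRoot_omega.pow_eq_one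
  rw [eq_inv_of_mul_eq_one_left h, inv_def, normSq_omega]; simp

theorem conj_ofReal_mul_omega (t : ℝ) : conj ((t : ℂ) * ω) = t * ω ^ 2 := by
  rw [map_mul, conj_ofReal, conj_omega]

theorem re_omega : (ω).re = -1 / 2 := by
  have := congrArg re omega_sq_add_omega_add_one
  rw [← conj_omega] at this
  simp only [add_re, conj_re, one_re, zero_re] at this; linarith

theorem normSq_ofReal_mul_omega_add (x y : ℝ) : normSq (x * ω + y) = x ^ 2 - x * y + y ^ 2 := by
  rw [normSq_add, normSq_mul, normSq_omega, normSq_ofReal, normSq_ofReal, conj_ofReal,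
    mul_comm _ (y : ℂ), ← mul_assoc, ← ofReal_mul, re_ofReal_mul, re_omega]
  ring

noncomputable def pseudoHypDist (z w : ℂ) : ℝ := ‖(z - w) / (1 - conj w * z)‖

theorem hypDist_eq_log_pseudoHypDist (z w : ℂ) :
    hypDist z w = Real.log ((1 + pseudoHypDist z w) / (1 - pseudoHypDist z w)) := rfl

theorem pseudoHypDist_sq (z w : ℂ) :
    pseudoHypDist z w ^ 2 = normSq (z - w) / normSq (1 - conj w * z) := by
  rw [pseudoHypDist, norm_div, div_pow, Complex.sq_norm, Complex.sq_norm]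

theorem pseudoHypDist_comm (z w : ℂ) : pseudoHypDist z w = pseudoHypDist w z := by
  rw [pseudoHypDist, pseudoHypDist, norm_div, norm_div, norm_sub_rev, ← norm_conj (1 - _)]
  simp [mul_comm]

theorem pseudoHypDist_conj (z w : ℂ) : pseudoHypDist (conj z) (conj w) = pseudoHypDist z w := by
  rw [pseudoHypDist, pseudoHypDist, ← norm_conj]
  simp

theorem hypDist_ofReal_conj (z : ℂ) (x : ℝ) : hypDist z x = hypDist x (conj z) := by
  have h : pseudoHypDist z x = pseudoHypDist x (conj z) := by
    rw [← pseudoHypDist_conj, conj_ofReal, pseudoHypDist_comm]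
  rw [hypDist_eq_log_pseudoHypDist, hypDist_eq_log_pseudoHypDist, h]

theorem normSq_one_sub_conj_mul_sub_normSq_sub (z w : ℂ) :
    normSq (1 - conj w * z) - normSq (z - w) = (1 - normSq z) * (1 - normSq w) := by
  simp only [normSq_apply, sub_re, sub_im, mul_re, mul_im, conj_re, conj_im, one_re, one_im]
  ring

theorem pseudoHypDist_lt_one {z w : ℂ} (hz : ‖z‖ < 1) (hw : ‖w‖ < 1) :
    pseudoHypDist z w < 1 := by
  have hz' : normSq z < 1 := by
    rw [← Complex.sq_norm]; exact pow_lt_one₀ (norm_nonneg z) hz two_ne_zero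
  have hw' : normSq w < 1 := by
    rw [← Complex.sq_norm]; exact pow_lt_one₀ (norm_nonneg w) hw two_ne_zero
  have hlt : normSq (z - w) < normSq (1 - conj w * z) := by
    linarith [normSq_one_sub_conj_mul_sub_normSq_sub z w,
      mul_pos (sub_pos.2 hz') (sub_pos.2 hw')]
  have hsq : pseudoHypDist z w ^ 2 < 1 := by
    rwa [pseudoHypDist_sq, div_lt_one ((normSq_nonneg _).trans_lt hlt)]
  exact (sq_lt_one_iff₀ (norm_nonneg _)).1 hsq

theorem one_add_div_one_sub_sq {x y : ℝ} (hx : x ≠ 1) (hxy : y * (1 + x ^ 2) = 2 * x) :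
    ((1 + x) / (1 - x)) ^ 2 = (1 + y) / (1 - y) := by
  have hx' : (1 - x) ^ 2 ≠ 0 := pow_ne_zero 2 (sub_ne_zero.2 hx.symm)
  have hy : (1 - y) * (1 + x ^ 2) = (1 - x) ^ 2 := by linear_combination -hxy
  have hy' : 1 - y ≠ 0 := left_ne_zero_of_mul (hy ▸ hx')
  rw [div_pow, div_eq_div_iff hx' hy']
  linear_combination (-2) * hxy

theorem two_mul_hypDist_eq {z w z' w' : ℂ} (h : pseudoHypDist z w ≠ 1)
    (hdouble : pseudoHypDist z' w' * (1 + pseudoHypDist z w ^ 2) = 2 * pseudoHypDist z w) :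
    2 * hypDist z w = hypDist z' w' := by
  rw [hypDist_eq_log_pseudoHypDist, hypDist_eq_log_pseudoHypDist,
    ← one_add_div_one_sub_sq h hdouble, Real.log_pow]
  norm_num

theorem pseudoHypDist_ofReal_mul_omega_ofReal_sq (t m : ℝ) :
    pseudoHypDist (t * ω) m ^ 2 = (t ^ 2 + t * m + m ^ 2) / (1 + t * m + t ^ 2 * m ^ 2) := by
  rw [pseudoHypDist_sq, conj_ofReal,
    show (t : ℂ) * ω - m = ((t : ℝ) : ℂ) * ω + ((-m : ℝ) : ℂ) by push_cast; ring,
    show 1 - (m : ℂ) * (t * ω) = ((-(t * m) : ℝ) : ℂ) * ω + ((1 : ℝ) : ℂ) by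
      push_cast; ring,
    normSq_ofReal_mul_omega_add, normSq_ofReal_mul_omega_add]
  congr 1 <;> ring

theorem pseudoHypDist_ofReal_mul_omega_omega_sq_sq (t : ℝ) :
    pseudoHypDist (t * ω) (t * ω ^ 2) ^ 2 = 3 * t ^ 2 / (1 + t ^ 2 + t ^ 4) := by
  rw [pseudoHypDist_sq, ← conj_ofReal_mul_omega, conj_conj,
    show (t : ℂ) * ω - conj (t * ω) = ((2 * t : ℝ) : ℂ) * ω + ((t : ℝ) : ℂ) by
      rw [conj_ofReal_mul_omega]; push_cast
      linear_combination (-t : ℂ) * omega_sq_add_omega_add_one,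
    show 1 - (t : ℂ) * ω * (t * ω) = ((t ^ 2 : ℝ) : ℂ) * ω + ((1 + t ^ 2 : ℝ) : ℂ) by
      push_cast; linear_combination (-t ^ 2 : ℂ) * omega_sq_add_omega_add_one,
    normSq_ofReal_mul_omega_add, normSq_ofReal_mul_omega_add]
  congr 1 <;> ring

theorem pseudoHypDist_omega_double {t m : ℝ} (hm : t * m ^ 2 + 2 * (1 + t ^ 2) * m + t = 0) :
    pseudoHypDist (t * ω) (t * ω ^ 2) * (1 + pseudoHypDist (t * ω) m ^ 2) =
      2 * pseudoHypDist (t * ω) m := by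
  have hD : 0 < 1 + t * m + t ^ 2 * m ^ 2 := by nlinarith [sq_nonneg (2 * t * m + 1)]
  have hS : 0 < 1 + t ^ 2 + t ^ 4 := by positivity
  refine (pow_left_inj₀ (by unfold pseudoHypDist; positivity)
    (by unfold pseudoHypDist; positivity) two_ne_zero).1 ?_
  rw [mul_pow, mul_pow, pseudoHypDist_ofReal_mul_omega_ofReal_sq,
    pseudoHypDist_ofReal_mul_omega_omega_sq_sq]
  field_simp
  -- With N/D := δ(tω, m)², S := 1 + t² + t⁴ and R the quadratic in `hm`:
  -- t(N + D) + 2mS = (1 + t²)R and ND - 3m²S = (tm² - (1 + t²)m + t)R.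
  linear_combination
    (3 * (1 + t ^ 2) * (t * (1 + t * m + t ^ 2 * m ^ 2 + t ^ 2 + t * m + m ^ 2)
      - 2 * m * (1 + t ^ 2 + t ^ 4))
      - 4 * (1 + t ^ 2 + t ^ 4) * (t * m ^ 2 - (1 + t ^ 2) * m + t)) * hm

theorem midpoint_quadratic {t : ℝ} (ht : t ≠ 0) :
    t * ((Real.sqrt (1 + t ^ 2 + t ^ 4) - 1 - t ^ 2) / t) ^ 2 +
      2 * (1 + t ^ 2) * ((Real.sqrt (1 + t ^ 2 + t ^ 4) - 1 - t ^ 2) / t) + t = 0 := by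
  have hs : Real.sqrt (1 + t ^ 2 + t ^ 4) ^ 2 = 1 + t ^ 2 + t ^ 4 := Real.sq_sqrt (by positivity)
  field_simp
  linear_combination hs

theorem midpoint_mem_Ioo {t : ℝ} (ht : t ∈ Set.Ioo (0 : ℝ) 1) :
    (Real.sqrt (1 + t ^ 2 + t ^ 4) - 1 - t ^ 2) / t ∈ Set.Ioo (-1 : ℝ) 0 := by
  obtain ⟨ht0, ht1⟩ := ht
  have hlt : Real.sqrt (1 + t ^ 2 + t ^ 4) < 1 + t ^ 2 := by
    rw [Real.sqrt_lt' (by positivity)]; nlinarith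
  have hgt : 1 + t ^ 2 - t < Real.sqrt (1 + t ^ 2 + t ^ 4) := by
    rw [Real.lt_sqrt (by nlinarith)]; nlinarith
  constructor
  · rw [lt_div_iff₀ ht0]; linarith
  · exact div_neg_of_neg_of_pos (by linarith) ht0

/-- For t ∈ (0,1) and ω = e^{2πi/3}, the hyperbolic midpoint of the geodesic
segment joining tω and tω² lies on the negative real axis at (√(1+t²+t⁴) − 1 − t²)/t:
it is a negative real number, lies on the geodesic (the triangle inequality is an
equality), and is hyperbolically equidistant from the two endpoints. -/
theorem hyperbolic_midpoint (t : ℝ) (ht : t ∈ Set.Ioo (0 : ℝ) 1) :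
    (Real.sqrt (1 + t ^ 2 + t ^ 4) - 1 - t ^ 2) / t < 0 ∧
    hypDist ((t : ℂ) * Complex.exp (2 * Real.pi * Complex.I / 3))
        (((Real.sqrt (1 + t ^ 2 + t ^ 4) - 1 - t ^ 2) / t : ℝ) : ℂ) =
      hypDist (((Real.sqrt (1 + t ^ 2 + t ^ 4) - 1 - t ^ 2) / t : ℝ) : ℂ)
        ((t : ℂ) * Complex.exp (2 * Real.pi * Complex.I / 3) ^ 2) ∧
    hypDist ((t : ℂ) * Complex.exp (2 * Real.pi * Complex.I / 3))
        (((Real.sqrt (1 + t ^ 2 + t ^ 4) - 1 - t ^ 2) / t : ℝ) : ℂ) +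
      hypDist (((Real.sqrt (1 + t ^ 2 + t ^ 4) - 1 - t ^ 2) / t : ℝ) : ℂ)
        ((t : ℂ) * Complex.exp (2 * Real.pi * Complex.I / 3) ^ 2) =
      hypDist ((t : ℂ) * Complex.exp (2 * Real.pi * Complex.I / 3))
        ((t : ℂ) * Complex.exp (2 * Real.pi * Complex.I / 3) ^ 2) := by
  obtain ⟨hm_gt, hm_neg⟩ := midpoint_mem_Ioo ht
  set m := (Real.sqrt (1 + t ^ 2 + t ^ 4) - 1 - t ^ 2) / t
  have hsymm : hypDist (t * ω) m = hypDist m (t * ω ^ 2) := by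
    rw [← conj_ofReal_mul_omega]; exact hypDist_ofReal_conj _ _
  have hδ : pseudoHypDist (t * ω) m ≠ 1 := by
    refine (pseudoHypDist_lt_one ?_ ?_).ne
    · rw [norm_mul, Complex.norm_real, isPrimitiveRoot_omega.norm'_eq_one three_ne_zero, mul_one,
        Real.norm_of_nonneg ht.1.le]
      exact ht.2
    · rw [Complex.norm_real, Real.norm_eq_abs, abs_lt]; exact ⟨hm_gt, hm_neg.trans one_pos⟩
  refine ⟨hm_neg, hsymm, ?_⟩
  rw [← hsymm, ← two_mul]
  exact two_mul_hypDist_eq hδ (pseudoHypDist_omega_double (midpoint_quadratic ht.1.ne'))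
end

section
/- Fix 0 < t ≤ 1 and let v₁ = 0, v₂ = s·e^{iπ/3}, v₃ = s·e^{-iπ/3} with s > 0 chosen so that ρ(v₁,v₂) = ρ(v₁,v₃) = t. Given ε > 0 there exists ξ > 0 such that whenever w₁, w₂, w₃ in the unit disk satisfy ρ(v_i, w_i) < tξ for i = 1,2,3, the hyperbolic angle φ = ∠w₂w₁w₃ of the hyperbolic triangle with vertices w₁,w₂,w₃ satisfies |2π/3 − φ| < ε. -/
/-!
At the origin the hyperbolic law of cosines reduces to the Euclidean one: with
`cosh ρ(z, w) = 1 + 2|z - w|² / ((1 - |z|²)(1 - |w|²))` and `sinh ρ(0, z) = 2|z| / (1 - |z|²)`,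
the cosine of the angle at `0` is `⟪z, w⟫ / (|z| |w|)`. Hence the model triangle has angle
`∠(e^{iπ/3}, e^{-iπ/3}) = 2π/3` at `0`. The angle depends continuously on nondegenerate
triangles, and Euclidean distance is bounded by hyperbolic distance (`2d ≤ log((1+d)/(1-d))`),
so vertices hyperbolically close to the model ones give an angle close to `2π/3`.
-/

open Complex

/-- The angle at the vertex w₁ of the hyperbolic triangle w₁w₂w₃, via the hyperbolic law
of cosines. -/
noncomputable def hypAngle (w₁ w₂ w₃ : ℂ) : ℝ :=
  Real.arccos ((Real.cosh (hypDist w₁ w₂) * Real.cosh (hypDist w₁ w₃) -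
      Real.cosh (hypDist w₂ w₃)) /
    (Real.sinh (hypDist w₁ w₂) * Real.sinh (hypDist w₁ w₃)))

open ComplexConjugate InnerProductGeometry
open scoped Real

section LogOneAddDivOneSub

variable {d : ℝ}

lemma cosh_log_one_add_div_one_sub (hd : |d| < 1) :
    Real.cosh (Real.log ((1 + d) / (1 - d))) = (1 + d ^ 2) / (1 - d ^ 2) := by
  obtain ⟨h₁, h₂⟩ := abs_lt.mp hd
  have : 1 + d ≠ 0 := by linarith
  have : 1 - d ≠ 0 := by linarith
  have : 1 - d ^ 2 ≠ 0 := by nlinarith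
  rw [Real.cosh_eq, Real.exp_neg, Real.exp_log (by apply div_pos <;> linarith)]
  field_simp
  ring

lemma sinh_log_one_add_div_one_sub (hd : |d| < 1) :
    Real.sinh (Real.log ((1 + d) / (1 - d))) = 2 * d / (1 - d ^ 2) := by
  obtain ⟨h₁, h₂⟩ := abs_lt.mp hd
  have : 1 + d ≠ 0 := by linarith
  have : 1 - d ≠ 0 := by linarith
  have : 1 - d ^ 2 ≠ 0 := by nlinarith
  rw [Real.sinh_eq, Real.exp_neg, Real.exp_log (by apply div_pos <;> linarith)]
  field_simp
  ring

-- `2 d` is the first term of the series `log (1 + d) - log (1 - d) = ∑ 2 d ^ (2k+1) / (2k+1)`,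
-- whose terms are all nonnegative.
lemma two_mul_le_log_one_add_div_one_sub (h₀ : 0 ≤ d) (h₁ : d < 1) :
    2 * d ≤ Real.log ((1 + d) / (1 - d)) := by
  have hd : |d| < 1 := abs_lt.mpr ⟨by linarith, h₁⟩
  rw [Real.log_div (by linarith) (by linarith)]
  simpa using le_hasSum (Real.hasSum_log_sub_log_of_abs_lt_one hd) 0
    (fun k _ => by positivity)

end LogOneAddDivOneSub

lemma norm_one_sub_conj_mul_sq_sub_norm_sub_sq (z w : ℂ) :
    ‖1 - conj w * z‖ ^ 2 - ‖z - w‖ ^ 2 = (1 - ‖z‖ ^ 2) * (1 - ‖w‖ ^ 2) := by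
  simp only [← normSq_eq_norm_sq, normSq_apply, mul_re, mul_im, sub_re, sub_im, one_re, one_im,
    conj_re, conj_im]
  ring

section Disk

variable {z w : ℂ}

lemma norm_sub_lt_norm_one_sub_conj_mul (hz : ‖z‖ < 1) (hw : ‖w‖ < 1) :
    ‖z - w‖ < ‖1 - conj w * z‖ := by
  have := norm_one_sub_conj_mul_sq_sub_norm_sub_sq z w
  have : 0 < (1 - ‖z‖ ^ 2) * (1 - ‖w‖ ^ 2) := by
    apply mul_pos <;> nlinarith [norm_nonneg z, norm_nonneg w]
  exact lt_of_pow_lt_pow_left₀ 2 (norm_nonneg _) (by linarith)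

lemma one_sub_conj_mul_ne_zero (hz : ‖z‖ < 1) (hw : ‖w‖ < 1) : 1 - conj w * z ≠ 0 :=
  norm_pos_iff.mp ((norm_nonneg _).trans_lt (norm_sub_lt_norm_one_sub_conj_mul hz hw))

lemma norm_div_one_sub_conj_mul_lt_one (hz : ‖z‖ < 1) (hw : ‖w‖ < 1) :
    ‖(z - w) / (1 - conj w * z)‖ < 1 := by
  rw [norm_div, div_lt_one (norm_pos_iff.mpr (one_sub_conj_mul_ne_zero hz hw))]
  exact norm_sub_lt_norm_one_sub_conj_mul hz hw

lemma dist_le_hypDist (hz : ‖z‖ < 1) (hw : ‖w‖ < 1) : dist z w ≤ hypDist z w := by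
  rw [dist_eq_norm]
  set d := ‖(z - w) / (1 - conj w * z)‖ with hd
  have hden : ‖1 - conj w * z‖ ≤ 2 := by
    calc ‖1 - conj w * z‖ ≤ 1 + ‖w‖ * ‖z‖ := by simpa using norm_sub_le 1 (conj w * z)
      _ ≤ 2 := by nlinarith [norm_nonneg z, norm_nonneg w]
  have : ‖z - w‖ = d * ‖1 - conj w * z‖ := by
    rw [hd, norm_div, div_mul_cancel₀ _ (norm_ne_zero_iff.mpr (one_sub_conj_mul_ne_zero hz hw))]
  calc ‖z - w‖ = d * ‖1 - conj w * z‖ := this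
    _ ≤ 2 * d := by nlinarith [norm_nonneg ((z - w) / (1 - conj w * z))]
    _ ≤ hypDist z w :=
      two_mul_le_log_one_add_div_one_sub (norm_nonneg _) (norm_div_one_sub_conj_mul_lt_one hz hw)

lemma cosh_hypDist (hz : ‖z‖ < 1) (hw : ‖w‖ < 1) :
    Real.cosh (hypDist z w) = 1 + 2 * ‖z - w‖ ^ 2 / ((1 - ‖z‖ ^ 2) * (1 - ‖w‖ ^ 2)) := by
  have hd := norm_div_one_sub_conj_mul_lt_one hz hw
  have hden := one_sub_conj_mul_ne_zero hz hw
  have hlt : ‖z - w‖ ^ 2 < ‖1 - conj w * z‖ ^ 2 := by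
    gcongr
    exact norm_sub_lt_norm_one_sub_conj_mul hz hw
  rw [hypDist, cosh_log_one_add_div_one_sub (by rwa [abs_norm]), norm_div,
    ← norm_one_sub_conj_mul_sq_sub_norm_sub_sq z w]
  have : ‖1 - conj w * z‖ ^ 2 - ‖z - w‖ ^ 2 ≠ 0 := by linarith
  rw [div_pow, one_add_div (by positivity), one_sub_div (by positivity),
    div_div_div_cancel_right₀ (by positivity)]
  field_simp
  ring

lemma hypDist_zero_left (w : ℂ) : hypDist 0 w = Real.log ((1 + ‖w‖) / (1 - ‖w‖)) := by
  simp [hypDist]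

lemma cosh_hypDist_zero_left (hw : ‖w‖ < 1) :
    Real.cosh (hypDist 0 w) = (1 + ‖w‖ ^ 2) / (1 - ‖w‖ ^ 2) := by
  rw [hypDist_zero_left, cosh_log_one_add_div_one_sub (by rwa [abs_norm])]

lemma sinh_hypDist_zero_left (hw : ‖w‖ < 1) :
    Real.sinh (hypDist 0 w) = 2 * ‖w‖ / (1 - ‖w‖ ^ 2) := by
  rw [hypDist_zero_left, sinh_log_one_add_div_one_sub (by rwa [abs_norm])]

lemma hypDist_pos (hz : ‖z‖ < 1) (hw : ‖w‖ < 1) (hzw : z ≠ w) : 0 < hypDist z w :=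
  (dist_pos.mpr hzw).trans_le (dist_le_hypDist hz hw)

lemma hypAngle_zero_left (hz : ‖z‖ < 1) (hw : ‖w‖ < 1) : hypAngle 0 z w = angle z w := by
  have ha : 1 - ‖z‖ ^ 2 ≠ 0 := by nlinarith [norm_nonneg z]
  have hb : 1 - ‖w‖ ^ 2 ≠ 0 := by nlinarith [norm_nonneg w]
  set c := 4 / ((1 - ‖z‖ ^ 2) * (1 - ‖w‖ ^ 2)) with hc_def
  have hc : c ≠ 0 := by positivity
  have hnum : Real.cosh (hypDist 0 z) * Real.cosh (hypDist 0 w) - Real.cosh (hypDist z w)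
      = c * inner ℝ z w := by
    rw [cosh_hypDist_zero_left hz, cosh_hypDist_zero_left hw, cosh_hypDist hz hw,
      norm_sub_sq_real, hc_def]
    field_simp
    ring
  have hden : Real.sinh (hypDist 0 z) * Real.sinh (hypDist 0 w) = c * (‖z‖ * ‖w‖) := by
    rw [sinh_hypDist_zero_left hz, sinh_hypDist_zero_left hw, hc_def]
    field_simp
    ring
  rw [hypAngle, hnum, hden, mul_div_mul_left _ _ hc, angle]

lemma continuousAt_hypDist (hz : ‖z‖ < 1) (hw : ‖w‖ < 1) :
    ContinuousAt (fun p : ℂ × ℂ => hypDist p.1 p.2) (z, w) := by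
  have hd : ContinuousAt (fun p : ℂ × ℂ => ‖(p.1 - p.2) / (1 - conj p.2 * p.1)‖) (z, w) := by
    fun_prop (disch := exact one_sub_conj_mul_ne_zero hz hw)
  have hpos : 0 < 1 - ‖(z - w) / (1 - conj w * z)‖ :=
    sub_pos.mpr (norm_div_one_sub_conj_mul_lt_one hz hw)
  exact ((continuousAt_const.add hd).div (continuousAt_const.sub hd) hpos.ne').log
    (div_pos (add_pos_of_pos_of_nonneg one_pos (norm_nonneg _)) hpos).ne'

end Disk

lemma continuousAt_hypAngle {w₁ w₂ w₃ : ℂ} (h₁ : ‖w₁‖ < 1) (h₂ : ‖w₂‖ < 1) (h₃ : ‖w₃‖ < 1)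
    (h₁₂ : w₁ ≠ w₂) (h₁₃ : w₁ ≠ w₃) :
    ContinuousAt (fun p : ℂ × ℂ × ℂ => hypAngle p.1 p.2.1 p.2.2) (w₁, w₂, w₃) := by
  have d₁₂ : ContinuousAt (fun p : ℂ × ℂ × ℂ => hypDist p.1 p.2.1) (w₁, w₂, w₃) :=
    ContinuousAt.comp (g := fun q : ℂ × ℂ => hypDist q.1 q.2)
      (f := fun p : ℂ × ℂ × ℂ => (p.1, p.2.1)) (continuousAt_hypDist h₁ h₂) (by fun_prop)
  have d₁₃ : ContinuousAt (fun p : ℂ × ℂ × ℂ => hypDist p.1 p.2.2) (w₁, w₂, w₃) :=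
    ContinuousAt.comp (g := fun q : ℂ × ℂ => hypDist q.1 q.2)
      (f := fun p : ℂ × ℂ × ℂ => (p.1, p.2.2)) (continuousAt_hypDist h₁ h₃) (by fun_prop)
  have d₂₃ : ContinuousAt (fun p : ℂ × ℂ × ℂ => hypDist p.2.1 p.2.2) (w₁, w₂, w₃) :=
    ContinuousAt.comp (g := fun q : ℂ × ℂ => hypDist q.1 q.2)
      (f := fun p : ℂ × ℂ × ℂ => (p.2.1, p.2.2)) (continuousAt_hypDist h₂ h₃) (by fun_prop)
  unfold hypAngle
  exact Real.continuous_arccos.continuousAt.comp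
    ((((Real.continuous_cosh.continuousAt.comp d₁₂).mul
      (Real.continuous_cosh.continuousAt.comp d₁₃)).sub
      (Real.continuous_cosh.continuousAt.comp d₂₃)).div
      ((Real.continuous_sinh.continuousAt.comp d₁₂).mul
        (Real.continuous_sinh.continuousAt.comp d₁₃))
      (mul_pos (Real.sinh_pos_iff.mpr (hypDist_pos h₁ h₂ h₁₂))
        (Real.sinh_pos_iff.mpr (hypDist_pos h₁ h₃ h₁₃))).ne')

lemma angle_mul_exp_pi_div_three_mul_I {r : ℂ} (hr : r ≠ 0) :
    angle (r * exp (π / 3 * I)) (r * exp (-(π / 3) * I)) = 2 * π / 3 := by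
  rw [angle_mul_left hr, show (π : ℂ) / 3 = ((π / 3 : ℝ) : ℂ) by push_cast; ring,
    ← ofReal_neg, angle_exp_exp, sub_neg_eq_add, toIocMod_eq_self _ |>.mpr]
  · rw [abs_of_pos (by positivity)]; ring
  · constructor <;> linarith [Real.pi_pos]

theorem angle_stability_general (t : ℝ) (ht0 : 0 < t) (ε : ℝ) (hε : 0 < ε) :
    ∃ ξ : ℝ, 0 < ξ ∧
      ∀ w₁ w₂ w₃ : ℂ, w₁ ∈ Metric.ball (0 : ℂ) 1 → w₂ ∈ Metric.ball (0 : ℂ) 1 →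
        w₃ ∈ Metric.ball (0 : ℂ) 1 →
        hypDist 0 w₁ < t * ξ →
        hypDist ((Real.tanh (t / 2) : ℂ) * Complex.exp (Real.pi / 3 * Complex.I)) w₂ < t * ξ →
        hypDist ((Real.tanh (t / 2) : ℂ) * Complex.exp (-(Real.pi / 3) * Complex.I)) w₃ < t * ξ →
        |2 * Real.pi / 3 - hypAngle w₁ w₂ w₃| < ε := by
  set s := Real.tanh (t / 2)
  set v₂ : ℂ := s * exp (π / 3 * I)
  set v₃ : ℂ := s * exp (-(π / 3) * I)
  have hs₀ : s ≠ 0 := by simpa using Real.tanh_injective.ne (a₂ := 0) (by positivity)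
  have hs₁ : |s| < 1 := Real.abs_tanh_lt_one _
  have h₀ : ‖(0 : ℂ)‖ < 1 := by simp
  have hv₂ : ‖v₂‖ < 1 := by simpa [v₂, norm_exp] using hs₁
  have hv₃ : ‖v₃‖ < 1 := by simpa [v₃, norm_exp] using hs₁
  obtain ⟨δ, hδ, hclose⟩ := Metric.continuousAt_iff.mp
    (continuousAt_hypAngle h₀ hv₂ hv₃ (by simp [v₂, hs₀]) (by simp [v₃, hs₀])) ε hε
  refine ⟨δ / t, div_pos hδ ht0, fun w₁ w₂ w₃ hw₁ hw₂ hw₃ h₁ h₂ h₃ => ?_⟩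
  rw [mul_div_cancel₀ _ ht0.ne'] at h₁ h₂ h₃
  rw [mem_ball_zero_iff] at hw₁ hw₂ hw₃
  have hdist {v w : ℂ} (hv : ‖v‖ < 1) (hw : ‖w‖ < 1) (h : hypDist v w < δ) : dist w v < δ :=
    (dist_comm w v).trans_lt ((dist_le_hypDist hv hw).trans_lt h)
  have := hclose (x := (w₁, w₂, w₃)) (by
    simp only [Prod.dist_eq, max_lt_iff]
    exact ⟨hdist h₀ hw₁ h₁, hdist hv₂ hw₂ h₂, hdist hv₃ hw₃ h₃⟩)
  rwa [hypAngle_zero_left hv₂ hv₃, angle_mul_exp_pi_div_three_mul_I (ofReal_ne_zero.mpr hs₀),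
    Real.dist_eq, abs_sub_comm] at this

/-- Fix 0 < t ≤ 1 and the triangle with vertices v₁ = 0,
v₂ = tanh(t/2)·e^{iπ/3}, v₃ = tanh(t/2)·e^{−iπ/3}, so that ρ(v₁,v₂) = ρ(v₁,v₃) = t.
For every ε > 0 there is ξ > 0 so that whenever w₁, w₂, w₃ in the disk satisfy
ρ(vᵢ,wᵢ) < tξ, the angle φ = ∠w₂w₁w₃ satisfies |2π/3 − φ| < ε. -/
theorem angle_stability (t : ℝ) (ht0 : 0 < t) (ht1 : t ≤ 1) (ε : ℝ) (hε : 0 < ε) :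
    ∃ ξ : ℝ, 0 < ξ ∧
      ∀ w₁ w₂ w₃ : ℂ, w₁ ∈ Metric.ball (0 : ℂ) 1 → w₂ ∈ Metric.ball (0 : ℂ) 1 →
        w₃ ∈ Metric.ball (0 : ℂ) 1 →
        hypDist 0 w₁ < t * ξ →
        hypDist ((Real.tanh (t / 2) : ℂ) * Complex.exp (Real.pi / 3 * Complex.I)) w₂ < t * ξ →
        hypDist ((Real.tanh (t / 2) : ℂ) * Complex.exp (-(Real.pi / 3) * Complex.I)) w₃ < t * ξ →
        |2 * Real.pi / 3 - hypAngle w₁ w₂ w₃| < ε :=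
  angle_stability_general t ht0 ε hε
end
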